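/- Let A = A_Ω ⊕ A_{Ω′} be the orthogonal sum of the Dirichlet realizations on Ω and Ω′, Ã the free selfadjoint realization of 𝓛 on H²(ℝⁿ), and Q(λ)φ = −∂f_λ/∂ν|_𝒞 − ∂f′_λ/∂ν′|_𝒞 for the unique f_λ ⊕ f′_λ ∈ ker(T−λ) with f_λ|_𝒞 = f′_λ|_𝒞 = φ. Then for λ ∈ ρ(A) ∩ ρ(Ã) the operator Q(λ) is injective and (A − λ)⁻¹ − (Ã − λ)⁻¹ = Γ(λ) Q(λ)⁻¹ Γ(λ̄)*, where Γ(λ)φ = f_λ ⊕ f′_λ. -/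

import Mathlib

open scoped InnerProductSpace ComplexConjugate

noncomputable section

variable {H1 H2 B : Type*}
  [NormedAddCommGroup H1] [InnerProductSpace ℂ H1] [CompleteSpace H1]
  [NormedAddCommGroup H2] [InnerProductSpace ℂ H2] [CompleteSpace H2]
  [NormedAddCommGroup B] [InnerProductSpace ℂ B] [CompleteSpace B]

/-- `R` is the (bounded, everywhere defined) resolvent of `A` at `lam`. -/
def IsResolventAt {E : Type*} [NormedAddCommGroup E] [InnerProductSpace ℂ E]
    (A : E →ₗ.[ℂ] E) (lam : ℂ) (R : E →L[ℂ] E) : Prop :=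
  (∀ x : E, ∃ hx : R x ∈ A.domain, A ⟨R x, hx⟩ - lam • R x = x) ∧
  (∀ x : A.domain, R (A x - lam • (x : E)) = x)

/-- `lam` belongs to the resolvent set of `A`. -/
def InResolventSet {E : Type*} [NormedAddCommGroup E] [InnerProductSpace ℂ E]
    (A : E →ₗ.[ℂ] E) (lam : ℂ) : Prop :=
  ∃ R : E →L[ℂ] E, IsResolventAt A lam R

/- Abstract coupled elliptic setting (cf. statements 17, 18): `H1 = L²(Ω)`, `H2 = L²(Ω′)`,
`B = L²(𝒞)`, `WithLp 2 (H1 × H2) = L²(ℝⁿ)`; `T1, T2` the `H²`-realizations of `𝓛` with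
Dirichlet traces `a0, b0` and conormal traces `a1, b1`; `A = A_D ⊕ A_D′` the orthogonal sum of
the Dirichlet realizations, `At = Ã` the free selfadjoint realization on `H²(ℝⁿ)`;
`Γm lam φ = f_lam ⊕ f′_lam` the unique element of `ker(T - lam)` with
`f_lam|_𝒞 = f′_lam|_𝒞 = φ`, and
`Qm lam φ = - ∂f_lam/∂ν|_𝒞 - ∂f′_lam/∂ν′|_𝒞` the coupled Dirichlet-to-Neumann map. -/

/-- For `lam ∈ ρ(A) ∩ ρ(Ã)` the operator `Q(lam)` is injective and the Krein
type formula `(A - lam)⁻¹ - (Ã - lam)⁻¹ = Γ(lam) Q(lam)⁻¹ Γ(conj lam)*` holds; pointwise: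
for every `x ∈ L²(ℝⁿ)` there are `ξ = Γ(conj lam)* x ∈ L²(𝒞)` (characterized weakly against
the dense subspace `H^{3/2}(𝒞)`) and `φ = Q(lam)⁻¹ ξ ∈ H^{3/2}(𝒞)` with
`(A - lam)⁻¹ x - (Ã - lam)⁻¹ x = Γ(lam) φ`. -/
theorem statement19
    (T1 : H1 →ₗ.[ℂ] H1) (T2 : H2 →ₗ.[ℂ] H2)
    (hT1dense : Dense (T1.domain : Set H1)) (hT2dense : Dense (T2.domain : Set H2))
    (a0 a1 : ↥T1.domain →ₗ[ℂ] B) (b0 b1 : ↥T2.domain →ₗ[ℂ] B)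
    (H32 H12 : Submodule ℂ B) (hH32dense : Dense (H32 : Set B)) (hH12dense : Dense (H12 : Set B))
    (ha0mem : ∀ f : T1.domain, a0 f ∈ H32) (hb0mem : ∀ f : T2.domain, b0 f ∈ H32)
    (ha1mem : ∀ f : T1.domain, a1 f ∈ H12) (hb1mem : ∀ f : T2.domain, b1 f ∈ H12)
    (hGreen1 : ∀ f g : T1.domain,
      ⟪T1 f, (g : H1)⟫_ℂ - ⟪(f : H1), T1 g⟫_ℂ = ⟪a0 f, a1 g⟫_ℂ - ⟪a1 f, a0 g⟫_ℂ)
    (hGreen2 : ∀ f g : T2.domain,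
      ⟪T2 f, (g : H2)⟫_ℂ - ⟪(f : H2), T2 g⟫_ℂ = ⟪b0 f, b1 g⟫_ℂ - ⟪b1 f, b0 g⟫_ℂ)
    (hsurj : ∀ φ ∈ H32, ∀ ψ ∈ H12, ∃ (f : T1.domain) (g : T2.domain),
      a0 f = b0 g ∧ a0 f = φ ∧ a1 f + b1 g = ψ)
    (A At : WithLp 2 (H1 × H2) →ₗ.[ℂ] WithLp 2 (H1 × H2))
    (hA : ∀ x y : WithLp 2 (H1 × H2),
      (x, y) ∈ A.graph ↔
        ∃ (h1 : x.ofLp.1 ∈ T1.domain) (h2 : x.ofLp.2 ∈ T2.domain),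
          a0 ⟨x.ofLp.1, h1⟩ = 0 ∧ b0 ⟨x.ofLp.2, h2⟩ = 0 ∧
          y.ofLp.1 = T1 ⟨x.ofLp.1, h1⟩ ∧ y.ofLp.2 = T2 ⟨x.ofLp.2, h2⟩)
    (hAsa : IsSelfAdjoint A) (hAtsa : IsSelfAdjoint At)
    (hAtT : ∀ x y : WithLp 2 (H1 × H2),
      (x, y) ∈ At.graph →
        ∃ (h1 : x.ofLp.1 ∈ T1.domain) (h2 : x.ofLp.2 ∈ T2.domain),
          a0 ⟨x.ofLp.1, h1⟩ = b0 ⟨x.ofLp.2, h2⟩ ∧ a1 ⟨x.ofLp.1, h1⟩ + b1 ⟨x.ofLp.2, h2⟩ = 0 ∧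
          y.ofLp.1 = T1 ⟨x.ofLp.1, h1⟩ ∧ y.ofLp.2 = T2 ⟨x.ofLp.2, h2⟩)
    (hAtfull : ∀ (x : WithLp 2 (H1 × H2)) (h1 : x.ofLp.1 ∈ T1.domain) (h2 : x.ofLp.2 ∈ T2.domain),
      a0 ⟨x.ofLp.1, h1⟩ = b0 ⟨x.ofLp.2, h2⟩ → a1 ⟨x.ofLp.1, h1⟩ + b1 ⟨x.ofLp.2, h2⟩ = 0 → x ∈ At.domain)
    (Γm : ℂ → (↥H32 →ₗ[ℂ] WithLp 2 (H1 × H2)))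
    (hΓm : ∀ lam : ℂ, InResolventSet A lam → ∀ φ : H32,
      ∃ (h1 : (Γm lam φ).ofLp.1 ∈ T1.domain) (h2 : (Γm lam φ).ofLp.2 ∈ T2.domain),
        T1 ⟨(Γm lam φ).ofLp.1, h1⟩ = lam • (Γm lam φ).ofLp.1 ∧
        T2 ⟨(Γm lam φ).ofLp.2, h2⟩ = lam • (Γm lam φ).ofLp.2 ∧
        a0 ⟨(Γm lam φ).ofLp.1, h1⟩ = φ ∧ b0 ⟨(Γm lam φ).ofLp.2, h2⟩ = φ)
    (huniq : ∀ lam : ℂ, InResolventSet A lam →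
      ∀ (x : WithLp 2 (H1 × H2)) (h1 : x.ofLp.1 ∈ T1.domain) (h2 : x.ofLp.2 ∈ T2.domain),
        T1 ⟨x.ofLp.1, h1⟩ = lam • x.ofLp.1 → T2 ⟨x.ofLp.2, h2⟩ = lam • x.ofLp.2 →
        a0 ⟨x.ofLp.1, h1⟩ = 0 → b0 ⟨x.ofLp.2, h2⟩ = 0 → x = 0)
    (Qm : ℂ → (↥H32 →ₗ[ℂ] B))
    (hQm : ∀ lam : ℂ, InResolventSet A lam →
      ∀ (φ : H32) (x : WithLp 2 (H1 × H2))
        (h1 : x.ofLp.1 ∈ T1.domain) (h2 : x.ofLp.2 ∈ T2.domain),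
        T1 ⟨x.ofLp.1, h1⟩ = lam • x.ofLp.1 → T2 ⟨x.ofLp.2, h2⟩ = lam • x.ofLp.2 →
        a0 ⟨x.ofLp.1, h1⟩ = (φ : B) → b0 ⟨x.ofLp.2, h2⟩ = (φ : B) →
        Qm lam φ = -(a1 ⟨x.ofLp.1, h1⟩) - b1 ⟨x.ofLp.2, h2⟩)
    (lam : ℂ) (RA RAt : WithLp 2 (H1 × H2) →L[ℂ] WithLp 2 (H1 × H2))
    (hRA : IsResolventAt A lam RA) (hRAt : IsResolventAt At lam RAt)
    (hlamc : InResolventSet A ((starRingEnd ℂ) lam)) :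
    (∀ φ : H32, Qm lam φ = 0 → φ = 0) ∧
    (∀ x : WithLp 2 (H1 × H2), ∃ (ξ : B) (φ : H32),
      (∀ ψ : H32, ⟪ξ, (ψ : B)⟫_ℂ = ⟪x, Γm ((starRingEnd ℂ) lam) ψ⟫_ℂ) ∧
      Qm lam φ = ξ ∧
      RA x - RAt x = Γm lam φ) := by
  have hres : InResolventSet A lam := ⟨RA, hRA⟩
  constructor
  · -- injectivity of Q(lam)
    intro φ hφ
    obtain ⟨h1, h2, hT1w, hT2w, ha0w, hb0w⟩ := hΓm lam hres φ
    have hq := hQm lam hres φ (Γm lam φ) h1 h2 hT1w hT2w ha0w hb0w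
    rw [hφ] at hq
    have hsum : a1 ⟨(Γm lam φ).ofLp.1, h1⟩ + b1 ⟨(Γm lam φ).ofLp.2, h2⟩ = 0 := by
      have h := hq.symm
      rw [show -(a1 ⟨(Γm lam φ).ofLp.1, h1⟩) - b1 ⟨(Γm lam φ).ofLp.2, h2⟩
          = -(a1 ⟨(Γm lam φ).ofLp.1, h1⟩ + b1 ⟨(Γm lam φ).ofLp.2, h2⟩) by abel] at h
      exact neg_eq_zero.mp h
    have hmemAt : Γm lam φ ∈ At.domain :=
      hAtfull (Γm lam φ) h1 h2 (ha0w.trans hb0w.symm) hsum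
    obtain ⟨h1', h2', _, _, hy1, hy2⟩ :=
      hAtT (Γm lam φ) (At ⟨Γm lam φ, hmemAt⟩) (At.mem_graph ⟨Γm lam φ, hmemAt⟩)
    have hAtw : At ⟨Γm lam φ, hmemAt⟩ = lam • Γm lam φ := by
      have e1 : (⟨(Γm lam φ).ofLp.1, h1'⟩ : T1.domain) = ⟨(Γm lam φ).ofLp.1, h1⟩ := rfl
      have e2 : (⟨(Γm lam φ).ofLp.2, h2'⟩ : T2.domain) = ⟨(Γm lam φ).ofLp.2, h2⟩ := rfl
      refine WithLp.ofLp_injective 2 (Prod.ext ?_ ?_)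
      · rw [hy1, e1, hT1w]; rfl
      · rw [hy2, e2, hT2w]; rfl
    have hret := hRAt.2 ⟨Γm lam φ, hmemAt⟩
    rw [hAtw] at hret
    simp only [sub_self, map_zero] at hret
    have hw0 : Γm lam φ = 0 := hret.symm
    have hz : (⟨(Γm lam φ).ofLp.1, h1⟩ : T1.domain) = 0 := Subtype.ext (congrArg (fun z => z.ofLp.1) hw0)
    rw [hz, map_zero] at ha0w
    exact Subtype.ext ha0w.symm
  · intro x
    obtain ⟨hu, hux⟩ := hRA.1 x
    obtain ⟨hut, hutx⟩ := hRAt.1 x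
    obtain ⟨hu1, hu2, ha0u, hb0u, hy1, hy2⟩ :=
      (hA (RA x) (A ⟨RA x, hu⟩)).1 (A.mem_graph ⟨RA x, hu⟩)
    obtain ⟨ht1, ht2, htr, hsumt, hz1, hz2⟩ :=
      hAtT (RAt x) (At ⟨RAt x, hut⟩) (At.mem_graph ⟨RAt x, hut⟩)
    have hux1 : (A ⟨RA x, hu⟩).ofLp.1 - lam • (RA x).ofLp.1 = x.ofLp.1 := congrArg (fun z => z.ofLp.1) hux
    have hux2 : (A ⟨RA x, hu⟩).ofLp.2 - lam • (RA x).ofLp.2 = x.ofLp.2 := congrArg (fun z => z.ofLp.2) hux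
    have hutx1 : (At ⟨RAt x, hut⟩).ofLp.1 - lam • (RAt x).ofLp.1 = x.ofLp.1 := congrArg (fun z => z.ofLp.1) hutx
    have hutx2 : (At ⟨RAt x, hut⟩).ofLp.2 - lam • (RAt x).ofLp.2 = x.ofLp.2 := congrArg (fun z => z.ofLp.2) hutx
    set w : WithLp 2 (H1 × H2) := RA x - RAt x with hwdef
    have hw1 : w.ofLp.1 ∈ T1.domain := sub_mem hu1 ht1
    have hw2 : w.ofLp.2 ∈ T2.domain := sub_mem hu2 ht2
    have ew1 : (⟨w.ofLp.1, hw1⟩ : T1.domain) = ⟨(RA x).ofLp.1, hu1⟩ - ⟨(RAt x).ofLp.1, ht1⟩ :=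
      Subtype.ext rfl
    have ew2 : (⟨w.ofLp.2, hw2⟩ : T2.domain) = ⟨(RA x).ofLp.2, hu2⟩ - ⟨(RAt x).ofLp.2, ht2⟩ :=
      Subtype.ext rfl
    set φ0 : B := a0 ⟨(RA x).ofLp.1, hu1⟩ - a0 ⟨(RAt x).ofLp.1, ht1⟩ with hφ0
    have hφ0mem : φ0 ∈ H32 := sub_mem (ha0mem _) (ha0mem _)
    set φ : H32 := ⟨φ0, hφ0mem⟩ with hφdef
    have ha0w : a0 ⟨w.ofLp.1, hw1⟩ = (φ : B) := by rw [ew1, map_sub]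
    have hb0w : b0 ⟨w.ofLp.2, hw2⟩ = (φ : B) := by
      show b0 _ = φ0
      rw [ew2, map_sub, hb0u, hφ0, ha0u, htr]
    -- eigen equations for w
    have hd1 : (A ⟨RA x, hu⟩).ofLp.1 - (At ⟨RAt x, hut⟩).ofLp.1
        = lam • (RA x).ofLp.1 - lam • (RAt x).ofLp.1 := by
      have h : ((A ⟨RA x, hu⟩).ofLp.1 - lam • (RA x).ofLp.1)
          - ((At ⟨RAt x, hut⟩).ofLp.1 - lam • (RAt x).ofLp.1) = 0 := by
        rw [hux1, hutx1, sub_self]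
      have h2 : ((A ⟨RA x, hu⟩).ofLp.1 - (At ⟨RAt x, hut⟩).ofLp.1)
          - (lam • (RA x).ofLp.1 - lam • (RAt x).ofLp.1) = 0 := by rw [← h]; abel
      exact sub_eq_zero.mp h2
    have hd2 : (A ⟨RA x, hu⟩).ofLp.2 - (At ⟨RAt x, hut⟩).ofLp.2
        = lam • (RA x).ofLp.2 - lam • (RAt x).ofLp.2 := by
      have h : ((A ⟨RA x, hu⟩).ofLp.2 - lam • (RA x).ofLp.2)
          - ((At ⟨RAt x, hut⟩).ofLp.2 - lam • (RAt x).ofLp.2) = 0 := by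
        rw [hux2, hutx2, sub_self]
      have h2 : ((A ⟨RA x, hu⟩).ofLp.2 - (At ⟨RAt x, hut⟩).ofLp.2)
          - (lam • (RA x).ofLp.2 - lam • (RAt x).ofLp.2) = 0 := by rw [← h]; abel
      exact sub_eq_zero.mp h2
    rw [hy1, hz1] at hd1
    rw [hy2, hz2] at hd2
    have hT1w : T1 ⟨w.ofLp.1, hw1⟩ = lam • w.ofLp.1 := by
      rw [ew1, T1.map_sub, hd1, ← smul_sub]
      exact rfl
    have hT2w : T2 ⟨w.ofLp.2, hw2⟩ = lam • w.ofLp.2 := by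
      rw [ew2, T2.map_sub, hd2, ← smul_sub]
      exact rfl
    -- identification w = Γm lam φ via uniqueness
    obtain ⟨g1m, g2m, hTg1, hTg2, hg0a, hg0b⟩ := hΓm lam hres φ
    have hdm1 : (w - Γm lam φ).ofLp.1 ∈ T1.domain := sub_mem hw1 g1m
    have hdm2 : (w - Γm lam φ).ofLp.2 ∈ T2.domain := sub_mem hw2 g2m
    have edm1 : (⟨(w - Γm lam φ).ofLp.1, hdm1⟩ : T1.domain)
        = ⟨w.ofLp.1, hw1⟩ - ⟨(Γm lam φ).ofLp.1, g1m⟩ := Subtype.ext rfl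
    have edm2 : (⟨(w - Γm lam φ).ofLp.2, hdm2⟩ : T2.domain)
        = ⟨w.ofLp.2, hw2⟩ - ⟨(Γm lam φ).ofLp.2, g2m⟩ := Subtype.ext rfl
    have hzero : w - Γm lam φ = 0 := by
      refine huniq lam hres (w - Γm lam φ) hdm1 hdm2 ?_ ?_ ?_ ?_
      · rw [edm1, T1.map_sub, hT1w, hTg1, ← smul_sub]; exact rfl
      · rw [edm2, T2.map_sub, hT2w, hTg2, ← smul_sub]; exact rfl
      · rw [edm1, map_sub, ha0w, hg0a, sub_self]
      · rw [edm2, map_sub, hb0w, hg0b, sub_self]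
    have hweq : w = Γm lam φ := sub_eq_zero.mp hzero
    have hq := hQm lam hres φ w hw1 hw2 hT1w hT2w ha0w hb0w
    have hxi : Qm lam φ = -(a1 ⟨(RA x).ofLp.1, hu1⟩) - b1 ⟨(RA x).ofLp.2, hu2⟩ := by
      rw [hq, ew1, ew2, map_sub, map_sub,
        show -(a1 ⟨(RA x).ofLp.1, hu1⟩ - a1 ⟨(RAt x).ofLp.1, ht1⟩)
            - (b1 ⟨(RA x).ofLp.2, hu2⟩ - b1 ⟨(RAt x).ofLp.2, ht2⟩)
          = -(a1 ⟨(RA x).ofLp.1, hu1⟩) - b1 ⟨(RA x).ofLp.2, hu2⟩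
            + (a1 ⟨(RAt x).ofLp.1, ht1⟩ + b1 ⟨(RAt x).ofLp.2, ht2⟩) by abel,
        hsumt, add_zero]
    refine ⟨Qm lam φ, φ, ?_, rfl, hweq⟩
    intro ψ
    obtain ⟨k1, k2, hTk1, hTk2, hk0a, hk0b⟩ := hΓm ((starRingEnd ℂ) lam) hlamc ψ
    set gc := Γm ((starRingEnd ℂ) lam) ψ with hgc
    have key1 : ⟪x.ofLp.1, gc.ofLp.1⟫_ℂ = -⟪a1 ⟨(RA x).ofLp.1, hu1⟩, (ψ : B)⟫_ℂ := by
      have hG := hGreen1 ⟨(RA x).ofLp.1, hu1⟩ ⟨gc.ofLp.1, k1⟩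
      rw [ha0u, hk0a, hTk1, inner_smul_right, inner_zero_left, zero_sub] at hG
      calc ⟪x.ofLp.1, gc.ofLp.1⟫_ℂ
          = ⟪T1 ⟨(RA x).ofLp.1, hu1⟩ - lam • (RA x).ofLp.1, gc.ofLp.1⟫_ℂ := by rw [← hux1, hy1]
        _ = ⟪T1 ⟨(RA x).ofLp.1, hu1⟩, gc.ofLp.1⟫_ℂ
            - (starRingEnd ℂ) lam * ⟪(RA x).ofLp.1, gc.ofLp.1⟫_ℂ := by
            rw [inner_sub_left, inner_smul_left]
        _ = -⟪a1 ⟨(RA x).ofLp.1, hu1⟩, (ψ : B)⟫_ℂ := hG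
    have key2 : ⟪x.ofLp.2, gc.ofLp.2⟫_ℂ = -⟪b1 ⟨(RA x).ofLp.2, hu2⟩, (ψ : B)⟫_ℂ := by
      have hG := hGreen2 ⟨(RA x).ofLp.2, hu2⟩ ⟨gc.ofLp.2, k2⟩
      rw [hb0u, hk0b, hTk2, inner_smul_right, inner_zero_left, zero_sub] at hG
      calc ⟪x.ofLp.2, gc.ofLp.2⟫_ℂ
          = ⟪T2 ⟨(RA x).ofLp.2, hu2⟩ - lam • (RA x).ofLp.2, gc.ofLp.2⟫_ℂ := by rw [← hux2, hy2]
        _ = ⟪T2 ⟨(RA x).ofLp.2, hu2⟩, gc.ofLp.2⟫_ℂ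
            - (starRingEnd ℂ) lam * ⟪(RA x).ofLp.2, gc.ofLp.2⟫_ℂ := by
            rw [inner_sub_left, inner_smul_left]
        _ = -⟪b1 ⟨(RA x).ofLp.2, hu2⟩, (ψ : B)⟫_ℂ := hG
    rw [hxi, WithLp.prod_inner_apply, key1, key2, inner_sub_left, inner_neg_left]
    ring
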